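/- Let τ₁ > 0, τ₀ > 0, V₀ > 0, V₁ > 0, and let z_c be any real number. Define Z(φ) = (τ₁ − φ·τ₀)/√(V₁ + φ²·V₀). Then the equation Z(φ) = z_c has at most one solution φ ∈ [0, ∞). -/

import Mathlib

open Real Set

noncomputable def fiellerStat (τ1 τ0 V1 V0 φ : ℝ) : ℝ :=
  (τ1 - φ * τ0) / √(V1 + φ ^ 2 * V0)

section FiellerStat

variable {τ1 τ0 V1 V0 : ℝ}

theorem hasDerivAt_fiellerStat {φ : ℝ} (hS : 0 < V1 + φ ^ 2 * V0) :
    HasDerivAt (fiellerStat τ1 τ0 V1 V0)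
      (-(τ0 * V1 + φ * V0 * τ1) / ((V1 + φ ^ 2 * V0) * √(V1 + φ ^ 2 * V0))) φ := by
  have hnum : HasDerivAt (fun x : ℝ => τ1 - x * τ0) (-τ0) φ := by
    simpa using ((hasDerivAt_id φ).mul_const τ0).const_sub τ1
  have hvar : HasDerivAt (fun x : ℝ => V1 + x ^ 2 * V0) (2 * φ * V0) φ := by
    simpa using ((hasDerivAt_pow 2 φ).mul_const V0).const_add V1
  have hsqrt : 0 < √(V1 + φ ^ 2 * V0) := sqrt_pos.mpr hS
  refine (hnum.div (hvar.sqrt hS.ne') hsqrt.ne').congr_deriv ?_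
  field_simp
  rw [sq_sqrt hS.le]
  ring

theorem continuous_fiellerStat (hV1 : 0 < V1) (hV0 : 0 ≤ V0) :
    Continuous (fiellerStat τ1 τ0 V1 V0) :=
  Continuous.div (by fun_prop) (by fun_prop) fun φ => (sqrt_pos.mpr (by positivity)).ne'

theorem strictAntiOn_fiellerStat (hτ1 : 0 ≤ τ1) (hτ0 : 0 < τ0) (hV1 : 0 < V1) (hV0 : 0 ≤ V0) :
    StrictAntiOn (fiellerStat τ1 τ0 V1 V0) (Ici 0) := by
  refine strictAntiOn_of_deriv_neg (convex_Ici 0) (continuous_fiellerStat hV1 hV0).continuousOn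
    fun φ hφ => ?_
  rw [interior_Ici, mem_Ioi] at hφ
  have hS : 0 < V1 + φ ^ 2 * V0 := by positivity
  rw [(hasDerivAt_fiellerStat hS).deriv]
  have hslope : 0 < τ0 * V1 + φ * V0 * τ1 := by positivity
  exact div_neg_of_neg_of_pos (neg_neg_of_pos hslope) (by positivity)

end FiellerStat

theorem stmt_1 (τ1 τ0 V0 V1 zc : ℝ) (hτ1 : 0 < τ1) (hτ0 : 0 < τ0)
    (hV0 : 0 < V0) (hV1 : 0 < V1) :
    ∀ φ1 ∈ Set.Ici (0:ℝ), ∀ φ2 ∈ Set.Ici (0:ℝ),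
      (τ1 - φ1 * τ0) / Real.sqrt (V1 + φ1 ^ 2 * V0) = zc →
      (τ1 - φ2 * τ0) / Real.sqrt (V1 + φ2 ^ 2 * V0) = zc →
      φ1 = φ2 := fun _ h1 _ h2 e1 e2 =>
  (strictAntiOn_fiellerStat hτ1.le hτ0 hV1 hV0.le).injOn h1 h2 (e1.trans e2.symm)
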